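/- Let each f_v : 2^V → [0,1] be monotone and submodular. Fix thresholds θ ∈ [0,1]^V. Define two coupled deterministic processes on subsets of V: (B_t) with B_0 = B_init and B_t = B_{t−1} ∪ {v ∉ B_{t−1} : f_v(B_{t−1}) − f_v(B_base) ≥ 1 − θ_v}, and (D_t) with D_0 = D_init and D_t = D_{t−1} ∪ {v ∉ D_{t−1} : f_v(D_{t−1}) − f_v(D_base) ≥ 1 − θ_v}, where B_base ⊆ D_base, B_init = B_base ∪ W, D_init = D_base ∪ W for a common set W disjoint from D_base, and D_base ∩ W = ∅. Then for all t: D_t \ D_base ⊆ B_t \ B_base, and for every v ∉ D_init, f_v(B_t) − f_v(B_base) ≥ f_v(D_t) − f_v(D_base). -/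
import Mathlib


open scoped Classical in
/-- The key invariants `(Ω₁, Ω₂)` of the antisense-phase coupling, stated
deterministically for fixed thresholds. -/
theorem antisense_invariants {V : Type*} [DecidableEq V] [Fintype V]
    (f : V → Finset V → ℝ)
    (h01 : ∀ (v : V) (S : Finset V), f v S ∈ Set.Icc (0:ℝ) 1)
    (hmono : ∀ v : V, ∀ S T : Finset V, S ⊆ T → f v S ≤ f v T)
    (hsub : ∀ v : V, ∀ S T : Finset V, f v (S ∩ T) + f v (S ∪ T) ≤ f v S + f v T)
    (θ : V → ℝ) (hθ : ∀ v, θ v ∈ Set.Icc (0:ℝ) 1)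
    (Bbase Dbase W : Finset V) (hBD : Bbase ⊆ Dbase) (hdisj : Disjoint Dbase W)
    (Binit Dinit : Finset V) (hBinit : Binit = Bbase ∪ W) (hDinit : Dinit = Dbase ∪ W)
    (Bseq Dseq : ℕ → Finset V)
    (hB0 : Bseq 0 = Binit) (hD0 : Dseq 0 = Dinit)
    (hBstep : ∀ t : ℕ, Bseq (t + 1) = Bseq t ∪
      Finset.univ.filter (fun v => v ∉ Bseq t ∧ 1 - θ v ≤ f v (Bseq t) - f v Bbase))
    (hDstep : ∀ t : ℕ, Dseq (t + 1) = Dseq t ∪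
      Finset.univ.filter (fun v => v ∉ Dseq t ∧ 1 - θ v ≤ f v (Dseq t) - f v Dbase))
    (t : ℕ) :
    Dseq t \ Dbase ⊆ Bseq t \ Bbase ∧
      ∀ v : V, v ∉ Dinit →
        f v (Dseq t) - f v Dbase ≤ f v (Bseq t) - f v Bbase := by
  have hBb : ∀ t, Bbase ⊆ Bseq t := by
    intro t; induction t with
    | zero => rw [hB0, hBinit]; exact Finset.subset_union_left
    | succ n ih => rw [hBstep n]; exact ih.trans Finset.subset_union_left
  have hDb : ∀ t, Dbase ⊆ Dseq t := by
    intro t; induction t with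
    | zero => rw [hD0, hDinit]; exact Finset.subset_union_left
    | succ n ih => rw [hDstep n]; exact ih.trans Finset.subset_union_left
  have key : ∀ t, Dseq t \ Dbase ⊆ Bseq t \ Bbase →
      ∀ v, f v (Dseq t) - f v Dbase ≤ f v (Bseq t) - f v Bbase := by
    intro t h1 v
    have hDA : Dbase ∪ (Dseq t \ Dbase) = Dseq t := Finset.union_sdiff_of_subset (hDb t)
    have hsub' := hsub v Dbase (Bbase ∪ (Dseq t \ Dbase))
    have h2 : f v Bbase ≤ f v (Dbase ∩ (Bbase ∪ (Dseq t \ Dbase))) := by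
      apply hmono
      exact Finset.subset_inter hBD Finset.subset_union_left
    have h3 : Dbase ∪ (Bbase ∪ (Dseq t \ Dbase)) = Dseq t := by
      rw [← Finset.union_assoc, Finset.union_eq_left.mpr hBD, hDA]
    have h4 : f v (Bbase ∪ (Dseq t \ Dbase)) ≤ f v (Bseq t) := by
      apply hmono
      apply Finset.union_subset (hBb t)
      exact (h1.trans (Finset.sdiff_subset)).trans (le_refl _)
    rw [h3] at hsub'
    linarith
  suffices h : Dseq t \ Dbase ⊆ Bseq t \ Bbase by
    exact ⟨h, fun v _ => key t h v⟩
  induction t with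
  | zero =>
    rw [hB0, hD0, hBinit, hDinit]
    intro v hv
    simp only [Finset.mem_sdiff, Finset.mem_union] at hv ⊢
    refine ⟨Or.inr ?_, fun hvB => hv.2 (hBD hvB)⟩
    rcases hv.1 with h | h
    · exact absurd h hv.2
    · exact h
  | succ n ih =>
    intro v hv
    simp only [Finset.mem_sdiff] at hv
    have hvnB : v ∉ Bbase := fun h => hv.2 (hBD h)
    rw [hDstep n] at hv
    rw [hBstep n]
    simp only [Finset.mem_sdiff, Finset.mem_union, Finset.mem_filter, Finset.mem_univ, true_and] at hv ⊢
    refine ⟨?_, hvnB⟩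
    rcases hv.1 with h | h
    · have := ih (Finset.mem_sdiff.mpr ⟨h, hv.2⟩)
      simp only [Finset.mem_sdiff] at this
      exact Or.inl this.1
    · by_cases hvB : v ∈ Bseq n
      · exact Or.inl hvB
      · exact Or.inr ⟨hvB, h.2.trans (key n ih v)⟩
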